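/- Let E be a graph and R a unital commutative ring. If (H,S) is an admissible pair in E, then the ideal I(H,S) of L_R(E) is a ring with a set of local units (a set of commuting idempotents U such that every x ∈ I(H,S) satisfies ux = xu = x for some u ∈ U). -/

import Mathlib

structure LPGraph where
  V : Type
  E : Type
  s : E → V
  r : E → V

namespace LPGraph

/-- `v ≥ w`: there is a directed path (possibly trivial) from `v` to `w`. -/
def Reaches (G : LPGraph) (v w : G.V) : Prop :=
  Relation.ReflTransGen (fun a b => ∃ e : G.E, G.s e = a ∧ G.r e = b) v w

def Hereditary (G : LPGraph) (X : Set G.V) : Prop :=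
  ∀ e : G.E, G.s e ∈ X → G.r e ∈ X

def Saturated (G : LPGraph) (X : Set G.V) : Prop :=
  ∀ v : G.V, {e : G.E | G.s e = v}.Finite → {e : G.E | G.s e = v}.Nonempty →
    (∀ e : G.E, G.s e = v → G.r e ∈ X) → v ∈ X

/-- The saturation of `X`: the smallest saturated subset containing `X`. -/
def saturation (G : LPGraph) (X : Set G.V) : Set G.V :=
  ⋂₀ {S : Set G.V | G.Saturated S ∧ X ⊆ S}

def tree (G : LPGraph) (v : G.V) : Set G.V := {w | G.Reaches v w}

def MT1 (G : LPGraph) (M : Set G.V) : Prop :=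
  ∀ v w : G.V, w ∈ M → G.Reaches v w → v ∈ M

def MT2 (G : LPGraph) (M : Set G.V) : Prop :=
  ∀ v ∈ M, {e : G.E | G.s e = v}.Finite → {e : G.E | G.s e = v}.Nonempty →
    ∃ e : G.E, G.s e = v ∧ G.r e ∈ M

def MT3on (G : LPGraph) (M : Set G.V) : Prop :=
  ∀ v ∈ M, ∀ w ∈ M, ∃ y ∈ M, G.Reaches v y ∧ G.Reaches w y

def MT3 (G : LPGraph) : Prop :=
  ∀ v w : G.V, ∃ y : G.V, G.Reaches v y ∧ G.Reaches w y

def Omega (G : LPGraph) (X : Set G.V) : Set G.V :=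
  {w | w ∉ X ∧ ∀ v ∈ X, ¬ G.Reaches w v}

def OmegaV (G : LPGraph) (v : G.V) : Set G.V :=
  {w | w ≠ v ∧ ¬ G.Reaches w v}

end LPGraph

namespace LPGraph

def IsBifurcation (G : LPGraph) (v : G.V) : Prop :=
  ∃ e f : G.E, e ≠ f ∧ G.s e = v ∧ G.s f = v

def IsPathList (G : LPGraph) (l : List G.E) : Prop :=
  l.Chain' (fun e f => G.r e = G.s f)

def IsClosedPath (G : LPGraph) (v : G.V) (l : List G.E) : Prop :=
  l ≠ [] ∧ G.IsPathList l ∧ (∀ e ∈ l.head?, G.s e = v) ∧ (∀ e ∈ l.getLast?, G.r e = v)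

def IsClosedSimplePath (G : LPGraph) (v : G.V) (l : List G.E) : Prop :=
  G.IsClosedPath v l ∧ ∀ e ∈ l.tail, G.s e ≠ v

def ConditionK (G : LPGraph) : Prop :=
  ∀ v : G.V, (¬ ∃ l : List G.E, G.IsClosedPath v l) ∨
    (∃ l₁ l₂ : List G.E, G.IsClosedSimplePath v l₁ ∧ G.IsClosedSimplePath v l₂ ∧ l₁ ≠ l₂)

def ConditionL (G : LPGraph) : Prop :=
  ∀ (v : G.V) (l : List G.E), G.IsClosedSimplePath v l →
    ∃ e ∈ l, ∃ f : G.E, f ≠ e ∧ G.s f = G.s e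

/-- `v` is a line point: no vertex in the tree of `v` is a bifurcation or the base of a
closed path. -/
def LinePoint (G : LPGraph) (v : G.V) : Prop :=
  ∀ w : G.V, G.Reaches v w →
    ¬ G.IsBifurcation w ∧ ¬ ∃ l : List G.E, G.IsClosedPath w l

/-- `B_H`: vertices outside `H` emitting infinitely many edges, but finitely many
(and at least one) into `E⁰ \ H`. -/
def BH (G : LPGraph) (H : Set G.V) : Set G.V :=
  {v | v ∉ H ∧ {e : G.E | G.s e = v}.Infinite ∧
    {e : G.E | G.s e = v ∧ G.r e ∉ H}.Finite ∧
    {e : G.E | G.s e = v ∧ G.r e ∉ H}.Nonempty}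

/-- An admissible pair: `H` hereditary saturated, `S ⊆ B_H`. -/
def Admissible (G : LPGraph) (H S : Set G.V) : Prop :=
  G.Hereditary H ∧ G.Saturated H ∧ S ⊆ G.BH H

/-- Finite paths in `G`, indexed by source and range. -/
inductive Path (G : LPGraph) : G.V → G.V → Type
  | nil (v : G.V) : Path G v v
  | cons (e : G.E) {w : G.V} (p : Path G (G.r e) w) : Path G (G.s e) w

def Path.length {G : LPGraph} : ∀ {v w : G.V}, Path G v w → ℕ
  | _, _, .nil _ => 0
  | _, _, .cons _ p => p.length + 1

/-- The path contains no bifurcations among the sources of its edges. -/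
def Path.NoBif {G : LPGraph} : ∀ {v w : G.V}, Path G v w → Prop
  | _, _, .nil _ => True
  | _, _, .cons e p => (∀ f : _, LPGraph.s _ f = LPGraph.s _ e → f = e) ∧ p.NoBif

end LPGraph

/-- Generators of the Leavitt path algebra: vertices, real edges and ghost edges. -/
inductive LGen (G : LPGraph) : Type
  | vertex : G.V → LGen G
  | edge : G.E → LGen G
  | ghost : G.E → LGen G

variable (R : Type) [CommRing R] (G : LPGraph)

noncomputable def fv (v : G.V) : FreeAlgebra R (LGen G) := FreeAlgebra.ι R (LGen.vertex v)
noncomputable def fe (e : G.E) : FreeAlgebra R (LGen G) := FreeAlgebra.ι R (LGen.edge e)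
noncomputable def fg (e : G.E) : FreeAlgebra R (LGen G) := FreeAlgebra.ι R (LGen.ghost e)

/-- The defining relations of the Leavitt path algebra. -/
inductive LRel : FreeAlgebra R (LGen G) → FreeAlgebra R (LGen G) → Prop
  | idem (v : G.V) : LRel (fv R G v * fv R G v) (fv R G v)
  | orth (v w : G.V) (h : v ≠ w) : LRel (fv R G v * fv R G w) 0
  | edge_src (e : G.E) : LRel (fv R G (G.s e) * fe R G e) (fe R G e)
  | edge_rng (e : G.E) : LRel (fe R G e * fv R G (G.r e)) (fe R G e)
  | ghost_rng (e : G.E) : LRel (fv R G (G.r e) * fg R G e) (fg R G e)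
  | ghost_src (e : G.E) : LRel (fg R G e * fv R G (G.s e)) (fg R G e)
  | ck1_same (e : G.E) : LRel (fg R G e * fe R G e) (fv R G (G.r e))
  | ck1_diff (e f : G.E) (h : e ≠ f) : LRel (fg R G e * fe R G f) 0
  | ck2 (v : G.V) (h1 : {e : G.E | G.s e = v}.Finite)
      (h2 : {e : G.E | G.s e = v}.Nonempty) :
      LRel (fv R G v) (∑ e ∈ h1.toFinset, fe R G e * fg R G e)

/-- The Leavitt path algebra `L_R(E)`. -/
abbrev LPA := RingQuot (LRel R G)

noncomputable def Xv (v : G.V) : LPA R G := RingQuot.mkAlgHom R (LRel R G) (fv R G v)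
noncomputable def Xe (e : G.E) : LPA R G := RingQuot.mkAlgHom R (LRel R G) (fe R G e)
noncomputable def Xg (e : G.E) : LPA R G := RingQuot.mkAlgHom R (LRel R G) (fg R G e)

open MulOpposite in
/-- The involution on `L_R(E)`, built from the universal property, sending
`v ↦ v`, `e ↦ e*`, `e* ↦ e` and reversing products. -/
noncomputable def preStar : FreeAlgebra R (LGen G) →ₐ[R] (LPA R G)ᵐᵒᵖ :=
  FreeAlgebra.lift R fun x => match x with
    | LGen.vertex v => op (Xv R G v)
    | LGen.edge e => op (Xg R G e)
    | LGen.ghost e => op (Xe R G e)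

section starlemmas

lemma Xv_mul_self (v : G.V) : Xv R G v * Xv R G v = Xv R G v := by
  simpa only [Xv, map_mul] using RingQuot.mkAlgHom_rel R (LRel.idem (R := R) (G := G) v)

lemma Xv_mul_Xv (v w : G.V) (h : v ≠ w) : Xv R G v * Xv R G w = 0 := by
  simpa only [Xv, map_mul, map_zero] using
    RingQuot.mkAlgHom_rel R (LRel.orth (R := R) (G := G) v w h)

lemma Xv_mul_Xe (e : G.E) : Xv R G (G.s e) * Xe R G e = Xe R G e := by
  simpa only [Xv, Xe, map_mul] using RingQuot.mkAlgHom_rel R (LRel.edge_src (R := R) (G := G) e)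

lemma Xe_mul_Xv (e : G.E) : Xe R G e * Xv R G (G.r e) = Xe R G e := by
  simpa only [Xv, Xe, map_mul] using RingQuot.mkAlgHom_rel R (LRel.edge_rng (R := R) (G := G) e)

lemma Xv_mul_Xg (e : G.E) : Xv R G (G.r e) * Xg R G e = Xg R G e := by
  simpa only [Xv, Xg, map_mul] using RingQuot.mkAlgHom_rel R (LRel.ghost_rng (R := R) (G := G) e)

lemma Xg_mul_Xv (e : G.E) : Xg R G e * Xv R G (G.s e) = Xg R G e := by
  simpa only [Xv, Xg, map_mul] using RingQuot.mkAlgHom_rel R (LRel.ghost_src (R := R) (G := G) e)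

lemma Xg_mul_Xe_same (e : G.E) : Xg R G e * Xe R G e = Xv R G (G.r e) := by
  simpa only [Xv, Xe, Xg, map_mul] using
    RingQuot.mkAlgHom_rel R (LRel.ck1_same (R := R) (G := G) e)

lemma Xg_mul_Xe_diff (e f : G.E) (h : e ≠ f) : Xg R G e * Xe R G f = 0 := by
  simpa only [Xe, Xg, map_mul, map_zero] using
    RingQuot.mkAlgHom_rel R (LRel.ck1_diff (R := R) (G := G) e f h)

lemma Xv_ck2 (v : G.V) (h1 : {e : G.E | G.s e = v}.Finite)
    (h2 : {e : G.E | G.s e = v}.Nonempty) :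
    Xv R G v = ∑ e ∈ h1.toFinset, Xe R G e * Xg R G e := by
  simpa only [Xv, Xe, Xg, map_mul, map_sum] using
    RingQuot.mkAlgHom_rel R (LRel.ck2 (R := R) (G := G) v h1 h2)

open MulOpposite in
lemma preStar_rel : ∀ ⦃a b : FreeAlgebra R (LGen G)⦄, LRel R G a b →
    preStar R G a = preStar R G b := by
  intro a b h
  induction h with
  | idem v =>
      simp only [map_mul, preStar, fv, FreeAlgebra.lift_ι_apply, ← op_mul]
      exact congrArg op (Xv_mul_self R G v)
  | orth v w h =>
      simp only [map_mul, map_zero, preStar, fv, FreeAlgebra.lift_ι_apply, ← op_mul]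
      rw [Xv_mul_Xv R G w v h.symm]; rfl
  | edge_src e =>
      simp only [map_mul, preStar, fv, fe, FreeAlgebra.lift_ι_apply, ← op_mul]
      exact congrArg op (Xg_mul_Xv R G e)
  | edge_rng e =>
      simp only [map_mul, preStar, fv, fe, FreeAlgebra.lift_ι_apply, ← op_mul]
      exact congrArg op (Xv_mul_Xg R G e)
  | ghost_rng e =>
      simp only [map_mul, preStar, fv, fg, FreeAlgebra.lift_ι_apply, ← op_mul]
      exact congrArg op (Xe_mul_Xv R G e)
  | ghost_src e =>
      simp only [map_mul, preStar, fv, fg, FreeAlgebra.lift_ι_apply, ← op_mul]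
      exact congrArg op (Xv_mul_Xe R G e)
  | ck1_same e =>
      simp only [map_mul, preStar, fv, fe, fg, FreeAlgebra.lift_ι_apply, ← op_mul]
      exact congrArg op (Xg_mul_Xe_same R G e)
  | ck1_diff e f h =>
      simp only [map_mul, map_zero, preStar, fe, fg, FreeAlgebra.lift_ι_apply, ← op_mul]
      rw [Xg_mul_Xe_diff R G f e h.symm]; rfl
  | ck2 v h1 h2 =>
      simp only [map_sum, map_mul, preStar, fv, fe, fg, FreeAlgebra.lift_ι_apply, ← op_mul,
        ← Finset.op_sum]
      exact congrArg op (Xv_ck2 R G v h1 h2)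

end starlemmas

open MulOpposite in
noncomputable def starHom : LPA R G →ₐ[R] (LPA R G)ᵐᵒᵖ :=
  RingQuot.liftAlgHom R ⟨preStar R G, preStar_rel R G⟩

/-- The canonical involution (`*`-operation) on `L_R(E)`. -/
noncomputable def lpaStar (x : LPA R G) : LPA R G := MulOpposite.unop (starHom R G x)

/-- The element of `L_R(E)` associated to a path (product of real edges;
a trivial path gives the vertex). -/
noncomputable def pathE : ∀ {v w : G.V}, G.Path v w → LPA R G
  | _, _, .nil v => Xv R G v
  | _, _, .cons e p => Xe R G e * pathE p

/-- The ghost element `α*` of `L_R(E)` associated to a path `α`. -/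
noncomputable def pathG : ∀ {v w : G.V}, G.Path v w → LPA R G
  | _, _, .nil v => Xv R G v
  | _, _, .cons e p => pathG p * Xg R G e

/-- The homogeneous lpaComponent of degree `k` of `L_R(E)`:
the `R`-span of elements `αβ*` with `|α| - |β| = k`. -/
noncomputable def lpaComponent (k : ℤ) : Submodule R (LPA R G) :=
  Submodule.span R {x : LPA R G |
    ∃ (v₁ v₂ w : G.V) (α : G.Path v₁ w) (β : G.Path v₂ w),
      (α.length : ℤ) - (β.length : ℤ) = k ∧ x = pathE R G α * pathG R G β}

/-- A two-sided ideal of `L_R(E)` is graded if each of its elements is an `R`-linear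
combination of homogeneous elements belonging to the ideal. -/
def IsGraded (I : TwoSidedIdeal (LPA R G)) : Prop :=
  ∀ x ∈ I, x ∈ Submodule.span R
    (⋃ k : ℤ, (I : Set (LPA R G)) ∩ (lpaComponent R G k : Set (LPA R G)))

/-- A basic ideal: `r • x ∈ I` with `r ≠ 0` implies `x ∈ I`, for `x` a vertex or an
element of the form `v - ∑ᵢ eᵢeᵢ*` with `s(eᵢ) = v`. -/
def IsBasic (I : TwoSidedIdeal (LPA R G)) : Prop :=
  (∀ (r : R) (v : G.V), r ≠ 0 → r • Xv R G v ∈ I → Xv R G v ∈ I) ∧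
  (∀ (r : R) (v : G.V) (F : Finset G.E), r ≠ 0 → (∀ e ∈ F, G.s e = v) →
    r • (Xv R G v - ∑ e ∈ F, Xe R G e * Xg R G e) ∈ I →
    (Xv R G v - ∑ e ∈ F, Xe R G e * Xg R G e) ∈ I)

/-- `v^H = v - ∑_{s(e)=v, r(e)∉H} ee*`. -/
noncomputable def vH (H : Set G.V) (v : G.V) : LPA R G :=
  Xv R G v - ∑ᶠ (e : G.E) (_ : G.s e = v ∧ G.r e ∉ H), Xe R G e * Xg R G e

/-- `I(H,S)`: the two-sided ideal generated by `{v : v ∈ H} ∪ {v^H : v ∈ S}`. -/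
noncomputable def IHS (H S : Set G.V) : TwoSidedIdeal (LPA R G) :=
  TwoSidedIdeal.span ((fun v => Xv R G v) '' H ∪ (fun v => vH R G H v) '' S)

/-- The quotient ring of `L_R(E)` by a two-sided ideal, as an `R`-algebra. -/
abbrev QuotLPA (I : TwoSidedIdeal (LPA R G)) := RingQuot (fun a b : LPA R G => a - b ∈ I)

/-- The quotient graph `E/(H,S)`. -/
def quotGraph (H S : Set G.V) (hH : G.Hereditary H) : LPGraph where
  V := {v : G.V // v ∉ H} ⊕ {v : G.V // v ∈ G.BH H ∧ v ∉ S}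
  E := {e : G.E // G.r e ∉ H} ⊕ {e : G.E // G.r e ∈ G.BH H ∧ G.r e ∉ S}
  s := fun x => match x with
    | Sum.inl e => Sum.inl ⟨G.s e.1, fun h => e.2 (hH e.1 h)⟩
    | Sum.inr e => Sum.inl ⟨G.s e.1, fun h => e.2.1.1 (hH e.1 h)⟩
  r := fun x => match x with
    | Sum.inl e => Sum.inl ⟨G.r e.1, e.2⟩
    | Sum.inr e => Sum.inr ⟨G.r e.1, e.2⟩

/-!
Every element of `I(H,S)` is an `R`-linear combination of monomials `α c β*`, where `α`, `β`
are paths ending at a vertex `v ∈ H ∪ S` and `c = v^H` (which is just `v` when `v ∈ H`): the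
span of these monomials is an ideal because, by (CK1), `e* v^H` is `e*` when `s(e) = v` and
`r(e) ∈ H`, and `0` otherwise.
The elements `γ c γ*` are pairwise commuting idempotents of `I(H,S)`, and `α c β*` is absorbed
by `α c α*` on the left and by `β c β*` on the right. Finite joins `x ∨ y = x + y - xy` of
commuting idempotents are again commuting idempotents and dominate each of their terms, so the
joins of finitely many `γ c γ*` form a set of local units.
-/

section LocalUnits

variable {A : Type*} [Ring A]

def listJoin : List A → A
  | [] => 0
  | x :: l => x + listJoin l - x * listJoin l

theorem listJoin_mem (I : TwoSidedIdeal A) {l : List A} (hl : ∀ x ∈ l, x ∈ I) :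
    listJoin l ∈ I := by
  induction l with
  | nil => exact I.zero_mem
  | cons y l ih =>
    obtain ⟨hy, hl⟩ := List.forall_mem_cons.1 hl
    exact I.sub_mem (I.add_mem hy (ih hl)) (I.mul_mem_left _ _ (ih hl))

theorem listJoin_commute {l : List A} {z : A} (hl : ∀ x ∈ l, Commute x z) :
    Commute (listJoin l) z := by
  induction l with
  | nil => exact Commute.zero_left z
  | cons y l ih =>
    obtain ⟨hy, hl⟩ := List.forall_mem_cons.1 hl
    exact (hy.add_left (ih hl)).sub_left (hy.mul_left (ih hl))

variable {E : Set A}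

theorem isIdempotentElem_listJoin (hidem : ∀ e ∈ E, IsIdempotentElem e)
    (hcomm : ∀ e ∈ E, ∀ e' ∈ E, Commute e e') {l : List A} (hl : ∀ x ∈ l, x ∈ E) :
    IsIdempotentElem (listJoin l) := by
  induction l with
  | nil => exact IsIdempotentElem.zero
  | cons y l ih =>
    obtain ⟨hy, hl⟩ := List.forall_mem_cons.1 hl
    exact (hidem y hy).add_sub_mul_of_commute
      (listJoin_commute fun x hx => hcomm x (hl x hx) y hy).symm (ih hl)

theorem listJoin_absorbs (hidem : ∀ e ∈ E, IsIdempotentElem e)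
    (hcomm : ∀ e ∈ E, ∀ e' ∈ E, Commute e e') {l : List A} (hl : ∀ x ∈ l, x ∈ E) :
    ∀ x ∈ l, listJoin l * x = x ∧ x * listJoin l = x := by
  induction l with
  | nil => simp
  | cons y l ih =>
    obtain ⟨hy, hl⟩ := List.forall_mem_cons.1 hl
    have hyj : Commute y (listJoin l) :=
      (listJoin_commute fun x hx => hcomm x (hl x hx) y hy).symm
    have hyy : y * y = y := hidem y hy
    simp only [List.mem_cons, forall_eq_or_imp, listJoin]
    refine ⟨⟨?_, ?_⟩, fun x hx => ?_⟩
    · rw [sub_mul, add_mul, hyy, mul_assoc, ← hyj.eq, ← mul_assoc, hyy, add_sub_cancel_right]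
    · rw [mul_sub, mul_add, hyy, ← mul_assoc, hyy, add_sub_cancel_right]
    · obtain ⟨hjx, hxj⟩ := ih hl x hx
      have hxy : Commute x y := hcomm x (hl x hx) y hy
      constructor
      · rw [sub_mul, add_mul, hjx, mul_assoc, hjx, add_sub_cancel_left]
      · rw [mul_sub, mul_add, hxj, ← mul_assoc, hxy.eq, mul_assoc, hxj, add_sub_cancel_left]

theorem exists_list_of_mem_span {k : Type*} [CommSemiring k] [Algebra k A] {T : Set A}
    (hT : ∀ t ∈ T, ∃ e ∈ E, ∃ e' ∈ E, e * t = t ∧ t * e' = t) {x : A}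
    (hx : x ∈ Submodule.span k T) :
    ∃ l : List A, (∀ y ∈ l, y ∈ E) ∧
      ∀ w : A, (∀ y ∈ l, w * y = y ∧ y * w = y) → w * x = x ∧ x * w = x := by
  induction hx using Submodule.span_induction with
  | mem t ht =>
    obtain ⟨e, he, e', he', het, hte⟩ := hT t ht
    refine ⟨[e, e'], by simp [he, he'], fun w hw => ?_⟩
    simp only [List.mem_cons, List.not_mem_nil, or_false, forall_eq_or_imp, forall_eq] at hw
    exact ⟨by rw [← het, ← mul_assoc, hw.1.1], by rw [← hte, mul_assoc, hw.2.2]⟩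
  | zero => exact ⟨[], by simp, fun w _ => by simp⟩
  | add x y _ _ hx hy =>
    obtain ⟨l, hl, hlx⟩ := hx
    obtain ⟨l', hl', hly⟩ := hy
    refine ⟨l ++ l', List.forall_mem_append.2 ⟨hl, hl'⟩, fun w hw => ?_⟩
    rw [List.forall_mem_append] at hw
    obtain ⟨hwx, hxw⟩ := hlx w hw.1
    obtain ⟨hwy, hyw⟩ := hly w hw.2
    exact ⟨by rw [mul_add, hwx, hwy], by rw [add_mul, hxw, hyw]⟩
  | smul r x _ hx =>
    obtain ⟨l, hl, hlx⟩ := hx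
    refine ⟨l, hl, fun w hw => ?_⟩
    obtain ⟨hwx, hxw⟩ := hlx w hw
    exact ⟨by rw [mul_smul_comm, hwx], by rw [smul_mul_assoc, hxw]⟩

theorem TwoSidedIdeal.exists_localUnits {k : Type*} [CommSemiring k] [Algebra k A]
    (I : TwoSidedIdeal A) {T : Set A} (hEI : E ⊆ I) (hidem : ∀ e ∈ E, IsIdempotentElem e)
    (hcomm : ∀ e ∈ E, ∀ e' ∈ E, Commute e e')
    (hT : ∀ t ∈ T, ∃ e ∈ E, ∃ e' ∈ E, e * t = t ∧ t * e' = t)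
    (hIT : (I : Set A) ⊆ Submodule.span k T) :
    ∃ U : Set A,
      (∀ u ∈ U, u ∈ I ∧ IsIdempotentElem u) ∧
      (∀ u ∈ U, ∀ u' ∈ U, u * u' = u' * u) ∧
      (∀ x ∈ I, ∃ u ∈ U, u * x = x ∧ x * u = x) := by
  refine ⟨{u | ∃ l : List A, (∀ x ∈ l, x ∈ E) ∧ listJoin l = u}, ?_, ?_, ?_⟩
  · rintro _ ⟨l, hl, rfl⟩
    exact ⟨listJoin_mem I fun x hx => hEI (hl x hx), isIdempotentElem_listJoin hidem hcomm hl⟩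
  · rintro _ ⟨l, hl, rfl⟩ _ ⟨l', hl', rfl⟩
    exact (listJoin_commute fun x hx =>
      (listJoin_commute fun y hy => hcomm y (hl' y hy) x (hl x hx)).symm).eq
  · intro x hx
    obtain ⟨l, hl, hlx⟩ := exists_list_of_mem_span hT (hIT hx)
    exact ⟨listJoin l, ⟨l, hl, rfl⟩, hlx _ (listJoin_absorbs hidem hcomm hl)⟩

end LocalUnits

section SpanIdeal

variable {k A X : Type*} {T : Set A}

theorem mul_mem_span_of_forall_ι [CommSemiring k] [Semiring A] [Algebra k A]
    (f : FreeAlgebra k X →ₐ[k] A) (hf : Function.Surjective f)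
    (hT : ∀ x, ∀ t ∈ T, f (FreeAlgebra.ι k x) * t ∈ Submodule.span k T) (a : A) {m : A}
    (hm : m ∈ Submodule.span k T) : a * m ∈ Submodule.span k T := by
  have of_mem_T (b : A) (hb : ∀ t ∈ T, b * t ∈ Submodule.span k T) :
      ∀ m ∈ Submodule.span k T, b * m ∈ Submodule.span k T :=
    fun _ hm =>
      (Submodule.span_le (p := (Submodule.span k T).comap (LinearMap.mulLeft k b))).2 hb hm
  obtain ⟨a, rfl⟩ := hf a
  induction a using FreeAlgebra.induction generalizing m with
  | grade0 r => simpa [Algebra.algebraMap_eq_smul_one] using Submodule.smul_mem _ r hm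
  | grade1 x => exact of_mem_T _ (hT x) m hm
  | mul p q hp hq => rw [map_mul, mul_assoc]; exact hp (hq hm)
  | add p q hp hq => rw [map_add, add_mul]; exact add_mem (hp hm) (hq hm)

theorem mem_span_mul_of_forall_ι [CommSemiring k] [Semiring A] [Algebra k A]
    (f : FreeAlgebra k X →ₐ[k] A) (hf : Function.Surjective f)
    (hT : ∀ x, ∀ t ∈ T, t * f (FreeAlgebra.ι k x) ∈ Submodule.span k T) (a : A) {m : A}
    (hm : m ∈ Submodule.span k T) : m * a ∈ Submodule.span k T := by
  have of_mem_T (b : A) (hb : ∀ t ∈ T, t * b ∈ Submodule.span k T) :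
      ∀ m ∈ Submodule.span k T, m * b ∈ Submodule.span k T :=
    fun _ hm =>
      (Submodule.span_le (p := (Submodule.span k T).comap (LinearMap.mulRight k b))).2 hb hm
  obtain ⟨a, rfl⟩ := hf a
  induction a using FreeAlgebra.induction generalizing m with
  | grade0 r => simpa [Algebra.algebraMap_eq_smul_one] using Submodule.smul_mem _ r hm
  | grade1 x => exact of_mem_T _ (hT x) m hm
  | mul p q hp hq => rw [map_mul, ← mul_assoc]; exact hq (hp hm)
  | add p q hp hq => rw [map_add, mul_add]; exact add_mem (hp hm) (hq hm)

theorem TwoSidedIdeal.span_subset_span_of_forall_ι [CommRing k] [Ring A] [Algebra k A]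
    (f : FreeAlgebra k X →ₐ[k] A) (hf : Function.Surjective f)
    (hleft : ∀ x, ∀ t ∈ T, f (FreeAlgebra.ι k x) * t ∈ Submodule.span k T)
    (hright : ∀ x, ∀ t ∈ T, t * f (FreeAlgebra.ι k x) ∈ Submodule.span k T)
    {s : Set A} (hs : s ⊆ Submodule.span k T) :
    (TwoSidedIdeal.span s : Set A) ⊆ Submodule.span k T := by
  let J : TwoSidedIdeal A := .mk' (Submodule.span k T) (Submodule.zero_mem _)
    (Submodule.add_mem _ · ·) (Submodule.neg_mem _ ·)
    (mul_mem_span_of_forall_ι f hf hleft _) (mem_span_mul_of_forall_ι f hf hright _)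
  have hJ : (J : Set A) = Submodule.span k T := TwoSidedIdeal.coe_mk' ..
  exact hJ ▸ TwoSidedIdeal.span_le.2 (hJ ▸ hs)

end SpanIdeal

def LPGraph.Path.snoc {G : LPGraph} {a b : G.V} :
    G.Path a b → (e : G.E) → G.s e = b → G.Path a (G.r e)
  | .nil _, e, h => h ▸ .cons e (.nil _)
  | .cons f p, e, h => .cons f (p.snoc e h)

section PathElements

variable {R G}

theorem Xv_mul_of_ne {v w : G.V} {x : LPA R G} (hx : Xv R G v * x = x) (h : w ≠ v) :
    Xv R G w * x = 0 := by
  rw [← hx, ← mul_assoc, Xv_mul_Xv R G w v h, zero_mul]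

theorem mul_Xv_of_ne {v w : G.V} {x : LPA R G} (hx : x * Xv R G v = x) (h : v ≠ w) :
    x * Xv R G w = 0 := by
  rw [← hx, mul_assoc, Xv_mul_Xv R G v w h, mul_zero]

theorem Xe_mul_of_ne {a : G.V} {e : G.E} {x : LPA R G} (hx : Xv R G a * x = x) (h : G.r e ≠ a) :
    Xe R G e * x = 0 := by
  rw [← Xe_mul_Xv, mul_assoc, Xv_mul_of_ne hx h, mul_zero]

theorem mul_Xg_of_ne {a : G.V} {e : G.E} {x : LPA R G} (hx : x * Xv R G a = x) (h : a ≠ G.r e) :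
    x * Xg R G e = 0 := by
  rw [← Xv_mul_Xg, ← mul_assoc, mul_Xv_of_ne hx h, zero_mul]

theorem Xv_mul_pathE {a b : G.V} (p : G.Path a b) : Xv R G a * pathE R G p = pathE R G p := by
  cases p with
  | nil => exact Xv_mul_self R G _
  | cons e p => rw [pathE, ← mul_assoc, Xv_mul_Xe]

theorem pathE_mul_Xv {a b : G.V} (p : G.Path a b) : pathE R G p * Xv R G b = pathE R G p := by
  induction p with
  | nil v => exact Xv_mul_self R G v
  | cons e p ih => rw [pathE, mul_assoc, ih]

theorem Xv_mul_pathG {a b : G.V} (p : G.Path a b) : Xv R G b * pathG R G p = pathG R G p := by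
  induction p with
  | nil v => exact Xv_mul_self R G v
  | cons e p ih => rw [pathG, ← mul_assoc, ih]

theorem pathG_mul_Xv {a b : G.V} (p : G.Path a b) : pathG R G p * Xv R G a = pathG R G p := by
  cases p with
  | nil => exact Xv_mul_self R G _
  | cons e p => rw [pathG, mul_assoc, Xg_mul_Xv]

theorem pathG_mul_pathE {a b : G.V} (p : G.Path a b) :
    pathG R G p * pathE R G p = Xv R G b := by
  induction p with
  | nil v => exact Xv_mul_self R G v
  | cons e p ih =>
    rw [pathG, pathE, mul_assoc, ← mul_assoc (Xg R G e), Xg_mul_Xe_same, Xv_mul_pathE, ih]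

theorem pathE_snoc {a b : G.V} (p : G.Path a b) (e : G.E) (h : G.s e = b) :
    pathE R G (p.snoc e h) = pathE R G p * Xe R G e := by
  induction p with
  | nil v => subst h; rw [LPGraph.Path.snoc, pathE, pathE, pathE, Xe_mul_Xv, Xv_mul_Xe]
  | cons f p ih => rw [LPGraph.Path.snoc, pathE, pathE, ih, mul_assoc]

theorem pathG_snoc {a b : G.V} (p : G.Path a b) (e : G.E) (h : G.s e = b) :
    pathG R G (p.snoc e h) = Xg R G e * pathG R G p := by
  induction p with
  | nil v => subst h; rw [LPGraph.Path.snoc, pathG, pathG, pathG, Xv_mul_Xg, Xg_mul_Xv]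
  | cons f p ih => rw [LPGraph.Path.snoc, pathG, pathG, ih, mul_assoc]

open Classical in
theorem Xg_mul_Xv_eq_ite (e : G.E) (v : G.V) :
    Xg R G e * Xv R G v = if G.s e = v then Xg R G e else 0 := by
  split_ifs with h
  · rw [← h, Xg_mul_Xv]
  · exact mul_Xv_of_ne (Xg_mul_Xv R G e) h

open Classical in
theorem Xv_mul_Xe_eq_ite (v : G.V) (e : G.E) :
    Xv R G v * Xe R G e = if G.s e = v then Xe R G e else 0 := by
  split_ifs with h
  · rw [← h, Xv_mul_Xe]
  · exact Xv_mul_of_ne (Xv_mul_Xe R G e) (Ne.symm h)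

open Classical in
theorem Xg_mul_sum_Xe_mul_Xg (e : G.E) (F : Finset G.E) :
    Xg R G e * ∑ f ∈ F, Xe R G f * Xg R G f = if e ∈ F then Xg R G e else 0 := by
  have hterm (f : G.E) : Xg R G e * (Xe R G f * Xg R G f) = if e = f then Xg R G e else 0 := by
    split_ifs with h
    · rw [← h, ← mul_assoc, Xg_mul_Xe_same, Xv_mul_Xg]
    · rw [← mul_assoc, Xg_mul_Xe_diff R G e f h, zero_mul]
  rw [Finset.mul_sum, Finset.sum_congr rfl fun f _ => hterm f, Finset.sum_ite_eq]

open Classical in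
theorem sum_Xe_mul_Xg_mul_Xe (F : Finset G.E) (e : G.E) :
    (∑ f ∈ F, Xe R G f * Xg R G f) * Xe R G e = if e ∈ F then Xe R G e else 0 := by
  have hterm (f : G.E) : Xe R G f * Xg R G f * Xe R G e = if f = e then Xe R G e else 0 := by
    split_ifs with h
    · rw [h, mul_assoc, Xg_mul_Xe_same, Xe_mul_Xv]
    · rw [mul_assoc, Xg_mul_Xe_diff R G f e h, mul_zero]
  rw [Finset.sum_mul, Finset.sum_congr rfl fun f _ => hterm f, Finset.sum_ite_eq']

end PathElements

section VH

variable {R G} {H : Set G.V} {v : G.V}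

theorem vH_eq_sub_sum (hfin : {e : G.E | G.s e = v ∧ G.r e ∉ H}.Finite) :
    vH R G H v = Xv R G v - ∑ e ∈ hfin.toFinset, Xe R G e * Xg R G e := by
  rw [vH]
  congr 1
  exact finsum_mem_eq_finite_toFinset_sum _ hfin

theorem vH_of_mem (hH : G.Hereditary H) (hv : v ∈ H) : vH R G H v = Xv R G v := by
  have hno_exit (e : G.E) : ¬ (G.s e = v ∧ G.r e ∉ H) := fun he => he.2 (hH e (he.1 ▸ hv))
  simp [vH, hno_exit]

variable (hfin : {e : G.E | G.s e = v ∧ G.r e ∉ H}.Finite)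
include hfin

theorem Xv_mul_vH : Xv R G v * vH R G H v = vH R G H v := by
  rw [vH_eq_sub_sum hfin, mul_sub, Xv_mul_self, Finset.mul_sum]
  congr 1
  refine Finset.sum_congr rfl fun f hf => ?_
  rw [← mul_assoc, ← (hfin.mem_toFinset.1 hf).1, Xv_mul_Xe]

theorem vH_mul_Xv : vH R G H v * Xv R G v = vH R G H v := by
  rw [vH_eq_sub_sum hfin, sub_mul, Xv_mul_self, Finset.sum_mul]
  congr 1
  refine Finset.sum_congr rfl fun f hf => ?_
  rw [mul_assoc, ← (hfin.mem_toFinset.1 hf).1, Xg_mul_Xv]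

open Classical in
theorem Xg_mul_vH (e : G.E) :
    Xg R G e * vH R G H v = if G.s e = v ∧ G.r e ∈ H then Xg R G e else 0 := by
  rw [vH_eq_sub_sum hfin, mul_sub, Xg_mul_Xv_eq_ite, Xg_mul_sum_Xe_mul_Xg]
  by_cases hs : G.s e = v <;> by_cases hr : G.r e ∈ H <;> simp [hs, hr]

open Classical in
theorem vH_mul_Xe (e : G.E) :
    vH R G H v * Xe R G e = if G.s e = v ∧ G.r e ∈ H then Xe R G e else 0 := by
  rw [vH_eq_sub_sum hfin, sub_mul, Xv_mul_Xe_eq_ite, sum_Xe_mul_Xg_mul_Xe]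
  by_cases hs : G.s e = v <;> by_cases hr : G.r e ∈ H <;> simp [hs, hr]

theorem isIdempotentElem_vH : IsIdempotentElem (vH R G H v) := by
  rw [IsIdempotentElem]
  nth_rw 1 [vH_eq_sub_sum hfin]
  rw [sub_mul, Xv_mul_vH hfin, Finset.sum_mul, Finset.sum_eq_zero, sub_zero]
  intro f hf
  rw [mul_assoc, Xg_mul_vH hfin, if_neg fun h => (hfin.mem_toFinset.1 hf).2 h.2, mul_zero]

end VH

theorem LPGraph.Admissible.finite_edges {G : LPGraph} {H S : Set G.V} (hAdm : G.Admissible H S)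
    {v : G.V} (hv : v ∈ H ∪ S) : {e : G.E | G.s e = v ∧ G.r e ∉ H}.Finite := by
  rcases hv with hv | hv
  · exact Set.finite_empty.subset fun e he => he.2 (hAdm.1 e (he.1 ▸ hv))
  · exact (hAdm.2.2 hv).2.2.1

def IHSMonomials (H S : Set G.V) : Set (LPA R G) :=
  {x | ∃ (a b v : G.V) (α : G.Path a v) (β : G.Path b v), v ∈ H ∪ S ∧
    x = pathE R G α * vH R G H v * pathG R G β}

section Monomials

variable {R G} {H S : Set G.V}

theorem pathE_mem_IHSMonomials (hH : G.Hereditary H) {a v : G.V} (α : G.Path a v) (hv : v ∈ H) :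
    pathE R G α ∈ IHSMonomials R G H S := by
  refine ⟨a, v, v, α, .nil v, .inl hv, ?_⟩
  rw [vH_of_mem hH hv, pathG, mul_assoc, Xv_mul_self, pathE_mul_Xv]

theorem pathG_mem_IHSMonomials (hH : G.Hereditary H) {b v : G.V} (β : G.Path b v) (hv : v ∈ H) :
    pathG R G β ∈ IHSMonomials R G H S := by
  refine ⟨v, b, v, .nil v, β, .inl hv, ?_⟩
  rw [vH_of_mem hH hv, pathE, Xv_mul_self, Xv_mul_pathG]

theorem vH_mem_IHSMonomials (hAdm : G.Admissible H S) {v : G.V} (hv : v ∈ H ∪ S) :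
    vH R G H v ∈ IHSMonomials R G H S := by
  refine ⟨v, v, v, .nil v, .nil v, hv, ?_⟩
  rw [pathE, pathG, Xv_mul_vH (hAdm.finite_edges hv), vH_mul_Xv (hAdm.finite_edges hv)]

variable {t : LPA R G}

theorem Xv_mul_mem_span (w : G.V) (ht : t ∈ IHSMonomials R G H S) :
    Xv R G w * t ∈ Submodule.span R (IHSMonomials R G H S) := by
  obtain ⟨a, b, v, α, β, hv, rfl⟩ := ht
  rw [← mul_assoc, ← mul_assoc]
  by_cases h : w = a
  · subst h
    rw [Xv_mul_pathE]
    exact Submodule.subset_span ⟨_, _, _, α, β, hv, rfl⟩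
  · rw [Xv_mul_of_ne (Xv_mul_pathE α) h, zero_mul, zero_mul]
    exact zero_mem _

theorem Xe_mul_mem_span (e : G.E) (ht : t ∈ IHSMonomials R G H S) :
    Xe R G e * t ∈ Submodule.span R (IHSMonomials R G H S) := by
  obtain ⟨a, b, v, α, β, hv, rfl⟩ := ht
  by_cases h : G.r e = a
  · subst h
    exact Submodule.subset_span ⟨_, _, _, .cons e α, β, hv, by simp only [pathE, mul_assoc]⟩
  · rw [← mul_assoc, ← mul_assoc, Xe_mul_of_ne (Xv_mul_pathE α) h, zero_mul, zero_mul]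
    exact zero_mem _

theorem Xg_mul_mem_span (hAdm : G.Admissible H S) (e : G.E) (ht : t ∈ IHSMonomials R G H S) :
    Xg R G e * t ∈ Submodule.span R (IHSMonomials R G H S) := by
  obtain ⟨a, b, v, α, β, hv, rfl⟩ := ht
  cases α with
  | nil =>
    rw [pathE, Xv_mul_vH (hAdm.finite_edges hv), ← mul_assoc, Xg_mul_vH (hAdm.finite_edges hv)]
    split_ifs with h
    · rw [← pathG_snoc β e h.1]
      exact Submodule.subset_span (pathG_mem_IHSMonomials hAdm.1 _ h.2)
    · rw [zero_mul]
      exact zero_mem _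
  | cons f α =>
    simp only [pathE, ← mul_assoc]
    by_cases h : e = f
    · subst h
      rw [Xg_mul_Xe_same, Xv_mul_pathE]
      exact Submodule.subset_span ⟨_, _, _, α, β, hv, rfl⟩
    · rw [Xg_mul_Xe_diff R G e f h, zero_mul, zero_mul, zero_mul]
      exact zero_mem _

theorem mul_Xv_mem_span (w : G.V) (ht : t ∈ IHSMonomials R G H S) :
    t * Xv R G w ∈ Submodule.span R (IHSMonomials R G H S) := by
  obtain ⟨a, b, v, α, β, hv, rfl⟩ := ht
  rw [mul_assoc]
  by_cases h : b = w
  · subst h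
    rw [pathG_mul_Xv]
    exact Submodule.subset_span ⟨_, _, _, α, β, hv, rfl⟩
  · rw [mul_Xv_of_ne (pathG_mul_Xv β) h, mul_zero]
    exact zero_mem _

theorem mul_Xg_mem_span (e : G.E) (ht : t ∈ IHSMonomials R G H S) :
    t * Xg R G e ∈ Submodule.span R (IHSMonomials R G H S) := by
  obtain ⟨a, b, v, α, β, hv, rfl⟩ := ht
  by_cases h : b = G.r e
  · subst h
    exact Submodule.subset_span ⟨_, _, _, α, .cons e β, hv, by simp only [pathG, mul_assoc]⟩
  · rw [mul_assoc, mul_Xg_of_ne (pathG_mul_Xv β) h, mul_zero]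
    exact zero_mem _

theorem mul_Xe_mem_span (hAdm : G.Admissible H S) (e : G.E) (ht : t ∈ IHSMonomials R G H S) :
    t * Xe R G e ∈ Submodule.span R (IHSMonomials R G H S) := by
  obtain ⟨a, b, v, α, β, hv, rfl⟩ := ht
  cases β with
  | nil =>
    rw [pathG, mul_assoc _ (vH R G H _), vH_mul_Xv (hAdm.finite_edges hv), mul_assoc,
      vH_mul_Xe (hAdm.finite_edges hv)]
    split_ifs with h
    · rw [← pathE_snoc α e h.1]
      exact Submodule.subset_span (pathE_mem_IHSMonomials hAdm.1 _ h.2)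
    · rw [mul_zero]
      exact zero_mem _
  | cons f β =>
    simp only [pathG, mul_assoc]
    by_cases h : f = e
    · subst h
      rw [Xg_mul_Xe_same, pathG_mul_Xv]
      exact Submodule.subset_span ⟨_, _, _, α, β, hv, by simp only [mul_assoc]⟩
    · rw [Xg_mul_Xe_diff R G f e h, mul_zero, mul_zero, mul_zero]
      exact zero_mem _

theorem IHS_subset_span_IHSMonomials (hAdm : G.Admissible H S) :
    (IHS R G H S : Set (LPA R G)) ⊆ Submodule.span R (IHSMonomials R G H S) := by
  refine TwoSidedIdeal.span_subset_span_of_forall_ι _ (RingQuot.mkAlgHom_surjective R (LRel R G))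
    (fun g t ht => ?_) (fun g t ht => ?_) ?_
  · cases g with
    | vertex w => exact Xv_mul_mem_span w ht
    | edge e => exact Xe_mul_mem_span e ht
    | ghost e => exact Xg_mul_mem_span hAdm e ht
  · cases g with
    | vertex w => exact mul_Xv_mem_span w ht
    | edge e => exact mul_Xe_mem_span hAdm e ht
    | ghost e => exact mul_Xg_mem_span e ht
  · rintro _ (⟨v, hv, rfl⟩ | ⟨v, hv, rfl⟩)
    · exact Submodule.subset_span (pathE_mem_IHSMonomials hAdm.1 (.nil v) hv)
    · exact Submodule.subset_span (vH_mem_IHSMonomials hAdm (.inr hv))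

end Monomials

noncomputable def pathIdem (H : Set G.V) {a v : G.V} (γ : G.Path a v) : LPA R G :=
  pathE R G γ * vH R G H v * pathG R G γ

def IHSIdempotents (H S : Set G.V) : Set (LPA R G) :=
  {x | ∃ (a v : G.V) (γ : G.Path a v), v ∈ H ∪ S ∧ x = pathIdem R G H γ}

section Idempotents

variable {R G} {H : Set G.V}

theorem conj_mul_conj (e : G.E) (x : LPA R G) {y : LPA R G} (hy : Xv R G (G.r e) * y = y) :
    Xe R G e * x * Xg R G e * (Xe R G e * y * Xg R G e) = Xe R G e * (x * y) * Xg R G e := by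
  simp only [mul_assoc]
  rw [← mul_assoc (Xg R G e), Xg_mul_Xe_same, ← mul_assoc (Xv R G _), hy]

theorem conj_mul_conj_of_ne {e f : G.E} (h : e ≠ f) (x y : LPA R G) :
    Xe R G e * x * Xg R G e * (Xe R G f * y * Xg R G f) = 0 := by
  simp only [mul_assoc]
  rw [← mul_assoc (Xg R G e), Xg_mul_Xe_diff R G e f h, zero_mul, mul_zero, mul_zero]

theorem pathIdem_cons (e : G.E) {v : G.V} (γ : G.Path (G.r e) v) :
    pathIdem R G H (.cons e γ) = Xe R G e * pathIdem R G H γ * Xg R G e := by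
  simp only [pathIdem, pathE, pathG, mul_assoc]

theorem Xv_mul_pathIdem {a v : G.V} (γ : G.Path a v) :
    Xv R G a * pathIdem R G H γ = pathIdem R G H γ := by
  rw [pathIdem, ← mul_assoc, ← mul_assoc, Xv_mul_pathE]

variable {v w : G.V} (hv : {e : G.E | G.s e = v ∧ G.r e ∉ H}.Finite)
include hv

theorem pathIdem_nil : pathIdem R G H (.nil v) = vH R G H v := by
  rw [pathIdem, pathE, pathG, Xv_mul_vH hv, vH_mul_Xv hv]

theorem isIdempotentElem_pathIdem {a : G.V} (γ : G.Path a v) :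
    IsIdempotentElem (pathIdem R G H γ) := by
  induction γ with
  | nil => rw [pathIdem_nil hv]; exact isIdempotentElem_vH hv
  | cons e γ ih =>
    rw [IsIdempotentElem, pathIdem_cons, conj_mul_conj _ _ (Xv_mul_pathIdem γ), ih hv]

theorem pathIdem_mul_monomial {a b : G.V} (α : G.Path a v) (β : G.Path b v) :
    pathIdem R G H α * (pathE R G α * vH R G H v * pathG R G β) =
      pathE R G α * vH R G H v * pathG R G β := by
  simp only [pathIdem, mul_assoc]
  rw [← mul_assoc (pathG R G α), pathG_mul_pathE, ← mul_assoc (Xv R G v), Xv_mul_vH hv,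
    ← mul_assoc (vH R G H v), (isIdempotentElem_vH hv).eq]

theorem monomial_mul_pathIdem {a b : G.V} (α : G.Path a v) (β : G.Path b v) :
    pathE R G α * vH R G H v * pathG R G β * pathIdem R G H β =
      pathE R G α * vH R G H v * pathG R G β := by
  simp only [pathIdem, mul_assoc]
  rw [← mul_assoc (pathG R G β), pathG_mul_pathE, ← mul_assoc (Xv R G v), Xv_mul_vH hv,
    ← mul_assoc (vH R G H v), (isIdempotentElem_vH hv).eq]

variable (hw : {e : G.E | G.s e = w ∧ G.r e ∉ H}.Finite)
include hw

theorem vH_mul_vH_of_ne (h : v ≠ w) : vH R G H v * vH R G H w = 0 := by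
  rw [← Xv_mul_vH hw, ← mul_assoc, mul_Xv_of_ne (vH_mul_Xv hv) h, zero_mul]

theorem vH_commute_pathIdem {a : G.V} (γ : G.Path a v) :
    Commute (vH R G H w) (pathIdem R G H γ) := by
  cases γ with
  | nil =>
    rw [pathIdem_nil hv]
    by_cases h : w = v
    · subst h; exact Commute.refl _
    · rw [Commute, SemiconjBy, vH_mul_vH_of_ne hw hv h, vH_mul_vH_of_ne hv hw (Ne.symm h)]
  | cons e γ =>
    rw [pathIdem_cons, Commute, SemiconjBy, ← mul_assoc, ← mul_assoc, vH_mul_Xe hw,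
      mul_assoc (Xe R G e * _), Xg_mul_vH hw]
    split_ifs <;> simp

theorem pathIdem_commute {a b : G.V} (γ : G.Path a v) (δ : G.Path b w) :
    Commute (pathIdem R G H γ) (pathIdem R G H δ) := by
  induction γ generalizing b with
  | nil => rw [pathIdem_nil hv]; exact vH_commute_pathIdem hw hv δ
  | cons e γ ih =>
    cases δ with
    | nil => rw [pathIdem_nil hw]; exact (vH_commute_pathIdem hv hw _).symm
    | cons f δ =>
      rw [pathIdem_cons, pathIdem_cons, Commute, SemiconjBy]
      by_cases h : e = f
      · subst h
        rw [conj_mul_conj _ _ (Xv_mul_pathIdem δ), conj_mul_conj _ _ (Xv_mul_pathIdem γ),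
          (ih hv δ).eq]
      · rw [conj_mul_conj_of_ne h, conj_mul_conj_of_ne (Ne.symm h)]

end Idempotents

section IdealMembership

variable {R G} {H S : Set G.V} {v : G.V}

theorem vH_mem_IHS (hH : G.Hereditary H) (hv : v ∈ H ∪ S) : vH R G H v ∈ IHS R G H S := by
  rcases hv with hv | hv
  · rw [vH_of_mem hH hv]
    exact TwoSidedIdeal.subset_span (.inl ⟨v, hv, rfl⟩)
  · exact TwoSidedIdeal.subset_span (.inr ⟨v, hv, rfl⟩)

theorem pathIdem_mem_IHS (hH : G.Hereditary H) {a : G.V} (γ : G.Path a v) (hv : v ∈ H ∪ S) :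
    pathIdem R G H γ ∈ IHS R G H S :=
  (IHS R G H S).mul_mem_right _ _ ((IHS R G H S).mul_mem_left _ _ (vH_mem_IHS hH hv))

end IdealMembership

/-- The ideal `I(H,S)` is a ring with a set of local units. -/
theorem IHS_local_units (G : LPGraph) (R : Type) [CommRing R] (H S : Set G.V)
    (hAdm : G.Admissible H S) :
    ∃ U : Set (LPA R G),
      (∀ u ∈ U, u ∈ IHS R G H S ∧ IsIdempotentElem u) ∧
      (∀ u ∈ U, ∀ u' ∈ U, u * u' = u' * u) ∧
      (∀ x ∈ IHS R G H S, ∃ u ∈ U, u * x = x ∧ x * u = x) := by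
  have hfin {v : G.V} (hv : v ∈ H ∪ S) := hAdm.finite_edges hv
  refine (IHS R G H S).exists_localUnits (k := R) (E := IHSIdempotents R G H S) ?_ ?_ ?_ ?_
    (IHS_subset_span_IHSMonomials hAdm)
  · rintro _ ⟨a, v, γ, hv, rfl⟩
    exact pathIdem_mem_IHS hAdm.1 γ hv
  · rintro _ ⟨a, v, γ, hv, rfl⟩
    exact isIdempotentElem_pathIdem (hfin hv) γ
  · rintro _ ⟨a, v, γ, hv, rfl⟩ _ ⟨b, w, δ, hw, rfl⟩
    exact pathIdem_commute (hfin hv) (hfin hw) γ δ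
  · rintro _ ⟨a, b, v, α, β, hv, rfl⟩
    exact ⟨_, ⟨a, v, α, hv, rfl⟩, _, ⟨b, v, β, hv, rfl⟩,
      pathIdem_mul_monomial (hfin hv) α β, monomial_mul_pathIdem (hfin hv) α β⟩
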